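/- arXiv:2507.04538 — 10 statements merged into one kernel-verified Lean document; each statement's English description precedes it below -/
import Mathlib

section
/- The union M of all bottleneck subsets of a monotone bottleneck subset problem is itself a bottleneck subset, and it is the unique maximal bottleneck subset (it contains every bottleneck subset). -/
open scoped Classical

/-- The quality of a nonempty subset: the minimum quality of its members
(an arbitrary value, `0`, on the empty set, which is never considered). -/
noncomputable def bQ {α : Type*} (q : α → Finset α → ℝ) (S : Finset α) : ℝ :=
  if h : S.Nonempty then S.inf' h (fun x => q x S) else 0

/-- A bottleneck subset: a nonempty subset of `U` maximizing `bQ`. -/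
def IsBottleneck {α : Type*} (U : Finset α) (q : α → Finset α → ℝ) (S : Finset α) : Prop :=
  S.Nonempty ∧ S ⊆ U ∧ ∀ T : Finset α, T.Nonempty → T ⊆ U → bQ q T ≤ bQ q S

/-- The union `M` of all bottleneck subsets of a monotone bottleneck subset problem is
itself a bottleneck subset, and it contains every bottleneck subset (so it is the
unique maximal one). -/
theorem stmt0 {α : Type*} [DecidableEq α] (U : Finset α) (hU : U.Nonempty)
    (q : α → Finset α → ℝ)
    (mono : ∀ (x : α) (S T : Finset α), x ∈ S → S ⊆ T → T ⊆ U → q x S ≤ q x T) :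
    IsBottleneck U q (U.filter fun x => ∃ S, IsBottleneck U q S ∧ x ∈ S) ∧
    ∀ S : Finset α, IsBottleneck U q S →
      S ⊆ U.filter fun x => ∃ S', IsBottleneck U q S' ∧ x ∈ S' := by
  set M := U.filter fun x => ∃ S, IsBottleneck U q S ∧ x ∈ S with hM
  -- containment of every bottleneck subset in M
  have hcont : ∀ S : Finset α, IsBottleneck U q S → S ⊆ M := by
    intro S hS x hx
    simp only [hM, Finset.mem_filter]
    exact ⟨hS.2.1 hx, S, hS, hx⟩
  -- existence of a bottleneck subset
  obtain ⟨S₀, hS₀P, hS₀max⟩ := (U.powerset.filter fun S => S.Nonempty).exists_max_image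
    (bQ q) ⟨U, by simp [hU]⟩
  simp only [Finset.mem_filter, Finset.mem_powerset] at hS₀P
  have hS₀bot : IsBottleneck U q S₀ := by
    refine ⟨hS₀P.2, hS₀P.1, fun T hT hTU => ?_⟩
    exact hS₀max T (by simp [Finset.mem_filter, Finset.mem_powerset, hTU, hT])
  have hMU : M ⊆ U := Finset.filter_subset _ _
  have hMne : M.Nonempty := hS₀P.2.mono (hcont S₀ hS₀bot)
  -- key: bQ q S₀ ≤ bQ q M
  have hkey : bQ q S₀ ≤ bQ q M := by
    have hQM : bQ q M = M.inf' hMne (fun x => q x M) := dif_pos hMne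
    rw [hQM, Finset.le_inf'_iff]
    intro x hx
    simp only [hM, Finset.mem_filter] at hx
    obtain ⟨hxU, S, hSbot, hxS⟩ := hx
    have hSM : S ⊆ M := hcont S hSbot
    calc bQ q S₀ ≤ bQ q S := hSbot.2.2 S₀ hS₀P.2 hS₀P.1
      _ ≤ q x S := by
          rw [bQ, dif_pos hSbot.1]; exact Finset.inf'_le _ hxS
      _ ≤ q x M := mono x S M hxS hSM hMU
  refine ⟨⟨hMne, hMU, fun T hT hTU => ?_⟩, hcont⟩
  exact le_trans (hS₀bot.2.2 T hT hTU) hkey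
end

section
/- Let β be the optimal quality of a monotone bottleneck subset problem and M its maximal bottleneck subset. For every set V with M ⊊ V ⊆ U, there exists y ∈ V with q(y,V) < β, and every such y satisfies y ∉ M. -/
open scoped Classical

/-- The union of all nonempty subsets of `U` achieving the optimal quality `β`. -/
noncomputable def maxBottleneck {α : Type*} (U : Finset α) (q : α → Finset α → ℝ) (β : ℝ) :
    Finset α :=
  U.filter fun x => ∃ S : Finset α, S.Nonempty ∧ S ⊆ U ∧ bQ q S = β ∧ x ∈ S

/-- Let `β` be the optimal quality and `M` the maximal bottleneck subset.  For every
`V` with `M ⊊ V ⊆ U` there is `y ∈ V` with `q y V < β`, and every such `y` is not in `M`. -/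
theorem stmt1 {α : Type*} [DecidableEq α] (U : Finset α) (hU : U.Nonempty)
    (q : α → Finset α → ℝ)
    (mono : ∀ (x : α) (S T : Finset α), x ∈ S → S ⊆ T → T ⊆ U → q x S ≤ q x T)
    (β : ℝ)
    (hub : ∀ S : Finset α, S.Nonempty → S ⊆ U → bQ q S ≤ β)
    (hach : ∃ S : Finset α, S.Nonempty ∧ S ⊆ U ∧ bQ q S = β) :
    ∀ V : Finset α, maxBottleneck U q β ⊂ V → V ⊆ U →
      (∃ y ∈ V, q y V < β) ∧ ∀ y ∈ V, q y V < β → y ∉ maxBottleneck U q β := by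
  intro V hMV hVU
  have hVne : V.Nonempty := by
    rcases Finset.exists_of_ssubset hMV with ⟨x, hxV, _⟩
    exact ⟨x, hxV⟩
  have hbQV : bQ q V = V.inf' hVne (fun x => q x V) := by
    simp [bQ, hVne]
  have hlt : bQ q V < β := by
    rcases lt_or_eq_of_le (hub V hVne hVU) with h | h
    · exact h
    · exfalso
      apply hMV.2
      intro x hxV
      exact Finset.mem_filter.2 ⟨hVU hxV, V, hVne, hVU, h, hxV⟩
  constructor
  · rw [hbQV] at hlt
    exact (Finset.inf'_lt_iff hVne).1 hlt
  · intro y hyV hqy hyM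
    rcases Finset.mem_filter.1 hyM with ⟨hyU, S, hSne, hSU, hbS, hyS⟩
    -- S ⊆ M ⊆ V
    have hSM : S ⊆ maxBottleneck U q β := fun z hz =>
      Finset.mem_filter.2 ⟨hSU hz, S, hSne, hSU, hbS, hz⟩
    have hSV : S ⊆ V := hSM.trans hMV.1
    have h1 : β ≤ q y S := by
      rw [← hbS]
      simp only [bQ, hSne, dif_pos]
      exact Finset.inf'_le _ hyS
    have h2 : q y S ≤ q y V := mono y S V hyS hSV hVU
    linarith
end

section
/- The known-β decremental algorithm always terminates at the maximal bottleneck subset M: starting from S = U, as long as S ≠ M there exists an element x ∈ S \ M with q(x,S) < β, and removing any element x ∈ S with q(x,S) < β keeps M ⊆ S. Hence any maximal sequence of such removals starting from U ends exactly at M. -/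
open scoped Classical

/-- One step of the known-β algorithm: remove some `x` with `q x S < β`. -/
def knownBetaStep {α : Type*} [DecidableEq α] (q : α → Finset α → ℝ) (β : ℝ)
    (A B : Finset α) : Prop :=
  ∃ x ∈ A, q x A < β ∧ B = A.erase x

/-- The known-β decremental algorithm always terminates at the maximal bottleneck subset `M`:
whenever `M ⊆ S ⊆ U` and `S ≠ M` there is a removable element of `S \ M`; removing any
removable element keeps `M ⊆ S`; and any maximal sequence of removals starting from `U`
ends exactly at `M`. -/
theorem stmt2 {α : Type*} [DecidableEq α] (U : Finset α) (hU : U.Nonempty)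
    (q : α → Finset α → ℝ)
    (mono : ∀ (x : α) (S T : Finset α), x ∈ S → S ⊆ T → T ⊆ U → q x S ≤ q x T)
    (β : ℝ)
    (hub : ∀ S : Finset α, S.Nonempty → S ⊆ U → bQ q S ≤ β)
    (hach : ∃ S : Finset α, S.Nonempty ∧ S ⊆ U ∧ bQ q S = β) :
    (∀ S : Finset α, maxBottleneck U q β ⊆ S → S ⊆ U → S ≠ maxBottleneck U q β →
      ∃ x ∈ S, x ∉ maxBottleneck U q β ∧ q x S < β) ∧
    (∀ S : Finset α, ∀ x ∈ S, maxBottleneck U q β ⊆ S → S ⊆ U → q x S < β →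
      maxBottleneck U q β ⊆ S.erase x) ∧
    (∀ S : Finset α, Relation.ReflTransGen (knownBetaStep q β) U S →
      (∀ x ∈ S, ¬ q x S < β) → S = maxBottleneck U q β) := by
  set M := maxBottleneck U q β with hM
  have hMsubU : M ⊆ U := Finset.filter_subset _ _
  have hmemM : ∀ x, x ∈ M ↔ x ∈ U ∧ ∃ S : Finset α, S.Nonempty ∧ S ⊆ U ∧ bQ q S = β ∧ x ∈ S := by
    intro x; rw [hM, maxBottleneck, Finset.mem_filter]
  have hself : ∀ S : Finset α, S.Nonempty → S ⊆ U → bQ q S = β → S ⊆ M := by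
    intro S hne hSU hQ x hx
    exact (hmemM x).2 ⟨hSU hx, S, hne, hSU, hQ, hx⟩
  have hMne : M.Nonempty := by
    obtain ⟨S, hne, hSU, hQ⟩ := hach
    obtain ⟨x, hx⟩ := hne
    exact ⟨x, hself S ⟨x, hx⟩ hSU hQ hx⟩
  have hqM : ∀ x ∈ M, β ≤ q x M := by
    intro x hx
    obtain ⟨-, S, hne, hSU, hQ, hxS⟩ := (hmemM x).1 hx
    have hSM : S ⊆ M := hself S hne hSU hQ
    have h1 : β ≤ q x S := by
      have := Finset.inf'_le (fun y => q y S) hxS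
      rwa [show S.inf' hne (fun y => q y S) = β from by
        simpa [bQ, hne] using hQ] at this
    exact h1.trans (mono x S M hxS hSM hMsubU)
  have part1 : ∀ S : Finset α, M ⊆ S → S ⊆ U → S ≠ M →
      ∃ x ∈ S, x ∉ M ∧ q x S < β := by
    intro S hMS hSU hne
    by_contra hcon
    push_neg at hcon
    have hSne : S.Nonempty := hMne.mono hMS
    have hge : ∀ x ∈ S, β ≤ q x S := by
      intro x hx
      by_cases hxM : x ∈ M
      · exact (hqM x hxM).trans (mono x M S hxM hMS hSU)
      · exact hcon x hx hxM
    have hQS : bQ q S = β := by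
      have h1 : β ≤ bQ q S := by
        rw [bQ, dif_pos hSne]
        exact Finset.le_inf' hSne _ hge
      exact le_antisymm (hub S hSne hSU) h1
    exact hne (le_antisymm (hself S hSne hSU hQS) hMS)
  have part2 : ∀ S : Finset α, ∀ x ∈ S, M ⊆ S → S ⊆ U → q x S < β →
      M ⊆ S.erase x := by
    intro S x hxS hMS hSU hlt y hy
    rw [Finset.mem_erase]
    refine ⟨?_, hMS hy⟩
    rintro rfl
    exact absurd ((hqM y hy).trans (mono y M S hy hMS hSU)) (not_le.mpr hlt)
  refine ⟨part1, part2, ?_⟩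
  intro S hreach hstall
  have hinv : M ⊆ S ∧ S ⊆ U := by
    clear hstall
    induction hreach with
    | refl => exact ⟨hMsubU, le_refl U⟩
    | tail h step ih =>
      obtain ⟨x, hxA, hlt, rfl⟩ := step
      exact ⟨part2 _ x hxA ih.1 ih.2 hlt, (Finset.erase_subset _ _).trans ih.2⟩
  by_contra hne
  obtain ⟨x, hxS, -, hlt⟩ := part1 S hinv.1 hinv.2 hne
  exact hstall x hxS hlt
end

section
/- For any x ∈ M, where M is the maximal bottleneck subset, and any set S with M ⊆ S ⊆ U, we have q(x,S) ≥ β. In particular Q(M) = β. -/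
open scoped Classical

/-- For each `x ∈ M` and each `S` with `M ⊆ S ⊆ U` we have `q x S ≥ β`;
in particular `Q(M) = β`. -/
theorem stmt3 {α : Type*} [DecidableEq α] (U : Finset α) (hU : U.Nonempty)
    (q : α → Finset α → ℝ)
    (mono : ∀ (x : α) (S T : Finset α), x ∈ S → S ⊆ T → T ⊆ U → q x S ≤ q x T)
    (β : ℝ)
    (hub : ∀ S : Finset α, S.Nonempty → S ⊆ U → bQ q S ≤ β)
    (hach : ∃ S : Finset α, S.Nonempty ∧ S ⊆ U ∧ bQ q S = β) :
    (∀ x ∈ maxBottleneck U q β, ∀ S : Finset α,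
      maxBottleneck U q β ⊆ S → S ⊆ U → β ≤ q x S) ∧
    bQ q (maxBottleneck U q β) = β := by
  set M := maxBottleneck U q β with hM
  have hsubM : ∀ S : Finset α, S.Nonempty → S ⊆ U → bQ q S = β → S ⊆ M := by
    intro S hS hSU hSb y hy
    simp only [hM, maxBottleneck, Finset.mem_filter]
    exact ⟨hSU hy, S, hS, hSU, hSb, hy⟩
  have hMU : M ⊆ U := Finset.filter_subset _ _
  have main : ∀ x ∈ M, ∀ S : Finset α, M ⊆ S → S ⊆ U → β ≤ q x S := by
    intro x hx S hMS hSU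
    simp only [hM, maxBottleneck, Finset.mem_filter] at hx
    obtain ⟨hxU, Sx, hSx, hSxU, hSxb, hxSx⟩ := hx
    have hSxM : Sx ⊆ M := hsubM Sx hSx hSxU hSxb
    have h1 : β ≤ q x Sx := by
      rw [← hSxb, bQ, dif_pos hSx]
      exact Finset.inf'_le _ hxSx
    exact h1.trans (mono x Sx S hxSx (hSxM.trans hMS) hSU)
  refine ⟨main, ?_⟩
  obtain ⟨S, hS, hSU, hSb⟩ := hach
  have hMne : M.Nonempty := hS.mono (hsubM S hS hSU hSb)
  have hle : bQ q M ≤ β := hub M hMne hMU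
  have hge : β ≤ bQ q M := by
    rw [bQ, dif_pos hMne]
    exact Finset.le_inf' _ _ fun x hx => main x hx M (le_refl M) hMU
  linarith
end

section
/- For a finite simple graph G, there is a unique maximal vertex subset M such that the induced subgraph G[M] has minimum degree equal to the maximum over all nonempty induced subgraphs of their minimum degree; M contains every vertex subset achieving this maximum. -/
open scoped Classical

/-- The minimum degree of the induced subgraph `G[S]` (0 for the empty set). -/
noncomputable def minDegOn {V : Type*} [DecidableEq V] (G : SimpleGraph V)
    [DecidableRel G.Adj] (S : Finset V) : ℕ :=
  if h : S.Nonempty then S.inf' h (fun x => (S.filter (G.Adj x)).card) else 0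

/-- For a finite nonempty simple graph `G`, letting `k` be the maximum over nonempty
vertex subsets `S` of the minimum degree of `G[S]`, there is a unique maximal subset `M`
with `minDeg G[M] = k`, and `M` contains every subset achieving the maximum. -/
theorem stmt5 {V : Type*} [Fintype V] [DecidableEq V] [Nonempty V]
    (G : SimpleGraph V) [DecidableRel G.Adj]
    (k : ℕ)
    (hub : ∀ S : Finset V, S.Nonempty → minDegOn G S ≤ k)
    (hach : ∃ S : Finset V, S.Nonempty ∧ minDegOn G S = k) :
    ∃! M : Finset V, M.Nonempty ∧ minDegOn G M = k ∧
      ∀ S : Finset V, S.Nonempty → minDegOn G S = k → S ⊆ M := by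
  set M : Finset V := Finset.univ.filter
    (fun v => ∃ S : Finset V, S.Nonempty ∧ minDegOn G S = k ∧ v ∈ S) with hM
  obtain ⟨S₀, hS₀ne, hS₀⟩ := hach
  obtain ⟨v₀, hv₀⟩ := hS₀ne
  have hMne : M.Nonempty := ⟨v₀, by simp [hM]; exact ⟨S₀, ⟨v₀, hv₀⟩, hS₀, hv₀⟩⟩
  have hsub : ∀ S : Finset V, S.Nonempty → minDegOn G S = k → S ⊆ M := by
    intro S hSne hSk v hv
    simp [hM]
    exact ⟨S, hSne, hSk, hv⟩
  have hMk : minDegOn G M = k := by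
    refine le_antisymm (hub M hMne) ?_
    rw [minDegOn, dif_pos hMne]
    rw [Finset.le_inf'_iff]
    intro x hx
    simp only [hM, Finset.mem_filter] at hx
    obtain ⟨-, S, hSne, hSk, hxS⟩ := hx
    have h1 : k ≤ (S.filter (G.Adj x)).card := by
      rw [← hSk, minDegOn, dif_pos hSne]
      exact Finset.inf'_le _ hxS
    exact h1.trans (Finset.card_le_card (Finset.filter_subset_filter _
      (hsub S hSne hSk)))
  refine ⟨M, ⟨hMne, hMk, hsub⟩, ?_⟩
  rintro M' ⟨hM'ne, hM'k, hM'sub⟩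
  exact Finset.Subset.antisymm (hsub M' hM'ne hM'k) (hM'sub M hMne hMk)
end

section
/- If a finite set S of points in the plane is not collinear, and T ⊆ S with x ∈ T, then the interior angle of x as a vertex of the convex hull of T (defined as 2π if x is not a vertex of the hull boundary) is at most the corresponding quantity for x with respect to any superset T' with T ⊆ T' ⊆ S. That is, removing points from a planar point set can only decrease (or keep equal) the convex-hull interior angle of each remaining point. -/
open scoped Classical
open EuclideanGeometry

/-- The interior angle of the convex hull of `T` at a point `x ∈ T`: `2π` if `x` is in
the interior of the hull or a non-vertex boundary point (equivalently, `x` is in the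
hull of the other points), and otherwise the angle of the tangent cone of the hull at
the vertex `x`, i.e. the supremum of angles `∠ y x z` over points `y, z` of the hull. -/
noncomputable def hullAngle (T : Finset (EuclideanSpace ℝ (Fin 2)))
    (x : EuclideanSpace ℝ (Fin 2)) : ℝ :=
  if x ∈ convexHull ℝ ((T : Set (EuclideanSpace ℝ (Fin 2))) \ {x}) then 2 * Real.pi
  else sSup {θ : ℝ | ∃ y ∈ convexHull ℝ (T : Set (EuclideanSpace ℝ (Fin 2))),
    ∃ z ∈ convexHull ℝ (T : Set (EuclideanSpace ℝ (Fin 2))),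
      y ≠ x ∧ z ≠ x ∧ θ = ∠ y x z}

/-- If `S` is a non-collinear finite planar point set and `x ∈ T ⊆ T' ⊆ S`, then the
convex-hull interior angle of `x` with respect to `T` is at most that with respect to
`T'`: removing points can only decrease the hull interior angle at remaining points. -/
theorem stmt7 (S T T' : Finset (EuclideanSpace ℝ (Fin 2)))
    (hS : ¬ Collinear ℝ (S : Set (EuclideanSpace ℝ (Fin 2))))
    (hTT' : T ⊆ T') (hT'S : T' ⊆ S)
    (x : EuclideanSpace ℝ (Fin 2)) (hx : x ∈ T) :
    hullAngle T x ≤ hullAngle T' x := by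
  have hsub : (T : Set (EuclideanSpace ℝ (Fin 2))) ⊆ (T' : Set (EuclideanSpace ℝ (Fin 2))) :=
    Finset.coe_subset.mpr hTT'
  unfold hullAngle
  by_cases h1 : x ∈ convexHull ℝ ((T' : Set (EuclideanSpace ℝ (Fin 2))) \ {x})
  · rw [if_pos h1]
    split_ifs with h0
    · exact le_refl _
    · apply Real.sSup_le
      · rintro θ ⟨y, hy, z, hz, hyx, hzx, rfl⟩
        calc ∠ y x z ≤ Real.pi := EuclideanGeometry.angle_le_pi y x z
          _ ≤ 2 * Real.pi := by linarith [Real.pi_pos]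
      · positivity
  · have h0 : x ∉ convexHull ℝ ((T : Set (EuclideanSpace ℝ (Fin 2))) \ {x}) :=
      fun h => h1 (convexHull_mono (Set.diff_subset_diff_left hsub) h)
    rw [if_neg h0, if_neg h1]
    have hbdd : BddAbove {θ : ℝ | ∃ y ∈ convexHull ℝ (T' : Set (EuclideanSpace ℝ (Fin 2))),
        ∃ z ∈ convexHull ℝ (T' : Set (EuclideanSpace ℝ (Fin 2))),
          y ≠ x ∧ z ≠ x ∧ θ = ∠ y x z} := by
      refine ⟨Real.pi, ?_⟩
      rintro θ ⟨y, hy, z, hz, hyx, hzx, rfl⟩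
      exact EuclideanGeometry.angle_le_pi y x z
    apply Real.sSup_le
    · rintro θ ⟨y, hy, z, hz, hyx, hzx, rfl⟩
      exact le_csSup hbdd ⟨y, convexHull_mono hsub hy, z, convexHull_mono hsub hz,
        hyx, hzx, rfl⟩
    · apply Real.sSup_nonneg
      rintro θ ⟨y, hy, z, hz, hyx, hzx, rfl⟩
      exact EuclideanGeometry.angle_nonneg y x z
end

section
/- Let G be a finite directed graph that contains at least one directed cycle, and suppose every vertex of G has in-degree ≥ 1 and out-degree ≥ 1. If G is not strongly connected, then G contains at least two vertex-disjoint directed cycles. -/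
/-- A directed cycle in the directed graph `E`: a closed directed walk of positive
length with no repeated vertices. -/
def IsDirCycle {V : Type*} (E : V → V → Prop) (n : ℕ) (f : ℕ → V) : Prop :=
  0 < n ∧ (∀ i < n, E (f i) (f (i + 1))) ∧ f n = f 0 ∧
    ∀ i j : ℕ, i < j → j < n → f i ≠ f j

/-- In a finite graph, any nonempty set closed under taking some out-neighbor
contains a directed cycle. -/
lemma exists_cycle_in {V : Type*} [Fintype V] (E : V → V → Prop) (S : Set V)
    (hne : S.Nonempty) (hcl : ∀ x ∈ S, ∃ y ∈ S, E x y) :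
    ∃ n f, IsDirCycle E n f ∧ ∀ i < n, f i ∈ S := by
  classical
  obtain ⟨x0, hx0⟩ := hne
  let g : ℕ → {x // x ∈ S} := fun k =>
    Nat.rec ⟨x0, hx0⟩
      (fun _ p => ⟨(hcl p.1 p.2).choose, (hcl p.1 p.2).choose_spec.1⟩) k
  have hg : ∀ k, E (g k).1 (g (k+1)).1 := fun k => (hcl (g k).1 (g k).2).choose_spec.2
  have hninj : ∃ a b : ℕ, a ≠ b ∧ (g a).1 = (g b).1 := by
    obtain ⟨a, b, hab, h⟩ := Finite.exists_ne_map_eq_of_infinite (fun k => (g k).1)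
    exact ⟨a, b, hab, h⟩
  have hP : ∃ j, ∃ i < j, (g i).1 = (g j).1 := by
    obtain ⟨a, b, hab, h⟩ := hninj
    rcases lt_or_gt_of_ne hab with h1 | h1
    · exact ⟨b, a, h1, h⟩
    · exact ⟨a, b, h1, h.symm⟩
  let j := Nat.find hP
  obtain ⟨i, hij, hgij⟩ : ∃ i < j, (g i).1 = (g j).1 := Nat.find_spec hP
  refine ⟨j - i, fun k => (g (i + k)).1, ⟨by omega, ?_, ?_, ?_⟩, fun k _ => (g (i + k)).2⟩
  · intro k _
    have := hg (i + k)
    simpa [Nat.add_assoc] using this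
  · show (g (i + (j - i))).1 = (g (i + 0)).1
    have : i + (j - i) = j := by omega
    rw [this, Nat.add_zero, hgij]
  · intro k l hkl hl heq
    have hlt : i + l < j := by omega
    exact absurd ⟨i + k, by omega, heq⟩ (Nat.find_min hP hlt)

/-- If a finite directed graph contains a directed cycle, every vertex has in-degree ≥ 1
and out-degree ≥ 1, and the graph is not strongly connected, then it contains two
vertex-disjoint directed cycles. -/
theorem stmt10 {V : Type*} [Fintype V] (E : V → V → Prop)
    (hcyc : ∃ (n : ℕ) (f : ℕ → V), IsDirCycle E n f)
    (hin : ∀ v : V, ∃ u : V, E u v) (hout : ∀ v : V, ∃ w : V, E v w)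
    (hnsc : ∃ u v : V, ¬ Relation.ReflTransGen E u v) :
    ∃ (n₁ : ℕ) (f₁ : ℕ → V) (n₂ : ℕ) (f₂ : ℕ → V),
      IsDirCycle E n₁ f₁ ∧ IsDirCycle E n₂ f₂ ∧
      ∀ i j : ℕ, i < n₁ → j < n₂ → f₁ i ≠ f₂ j := by
  classical
  obtain ⟨u, v, huv⟩ := hnsc
  set S : Set V := {x | Relation.ReflTransGen E u x} with hS
  set T : Set V := {x | Relation.ReflTransGen E x v} with hT
  -- cycle in S
  obtain ⟨n₁, f₁, hc₁, hm₁⟩ := exists_cycle_in E S ⟨u, Relation.ReflTransGen.refl⟩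
    (fun x hx => by
      obtain ⟨w, hw⟩ := hout x
      exact ⟨w, Relation.ReflTransGen.tail hx hw, hw⟩)
  -- cycle in T for the reversed relation
  obtain ⟨n₂, f, hc₂, hm₂⟩ := exists_cycle_in (fun a b => E b a) T
    ⟨v, Relation.ReflTransGen.refl⟩
    (fun x hx => by
      obtain ⟨w, hw⟩ := hin x
      exact ⟨w, Relation.ReflTransGen.head hw hx, hw⟩)
  obtain ⟨hn₂, hedge, hclose, hdist⟩ := hc₂
  -- reverse the cycle
  have hmem : ∀ k ≤ n₂, f k ∈ T := by
    intro k hk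
    rcases eq_or_lt_of_le hk with h | h
    · rw [h, hclose]; exact hm₂ 0 hn₂
    · exact hm₂ k h
  refine ⟨n₁, f₁, n₂, fun k => f (n₂ - k), hc₁, ⟨hn₂, ?_, ?_, ?_⟩, ?_⟩
  · intro k hk
    have h1 : n₂ - (k + 1) < n₂ := by omega
    have h2 : n₂ - (k + 1) + 1 = n₂ - k := by omega
    have := hedge (n₂ - (k + 1)) h1
    rw [h2] at this
    exact this
  · simp [Nat.sub_self]
    rw [hclose]
  · intro k l hkl hl heq
    rcases Nat.eq_zero_or_pos k with hk0 | hk0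
    · subst hk0
      simp only [Nat.sub_zero, hclose] at heq
      exact hdist 0 (n₂ - l) (by omega) (by omega) heq
    · exact hdist (n₂ - l) (n₂ - k) (by omega) (by omega) heq.symm
  · intro a b ha hb heq
    have h1 : f₁ a ∈ S := hm₁ a ha
    have h2 : f (n₂ - b) ∈ T := hmem (n₂ - b) (by omega)
    rw [heq] at h1
    exact huv (Relation.ReflTransGen.trans h1 h2)
end

section
/- Let G be a mixed graph whose undirected subgraph is acyclic (a forest) and which contains a closed u-turn-free walk W using at least one directed edge. Let G' be the directed multigraph obtained from G by deleting all edges not used by W and contracting all undirected edges used by W. Then every vertex of G' has in-degree ≥ 1 and out-degree ≥ 1, so G' contains a directed cycle. -/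
/-- A closed walk of period `n > 0` in a mixed graph with directed edges `D` and
undirected edges `U`: `f` lists the vertices, and `s i = true` iff step `i` uses a
directed edge. -/
def IsClosedWalk {V : Type*} (D U : V → V → Prop) (n : ℕ) (f : ℕ → V) (s : ℕ → Bool) :
    Prop :=
  0 < n ∧ (∀ i, f (i + n) = f i) ∧ (∀ i, s (i + n) = s i) ∧
    ∀ i, (s i = true → D (f i) (f (i + 1))) ∧ (s i = false → U (f i) (f (i + 1)))

/-- A u-turn is a pair of consecutive steps traversing the same undirected edge in
opposite directions; a walk is u-turn-free if it has none (cyclically). -/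
def UTurnFree {V : Type*} (f : ℕ → V) (s : ℕ → Bool) : Prop :=
  ∀ i, ¬(s i = false ∧ s (i + 1) = false ∧ f (i + 2) = f i)

/-- Two vertices are identified by the contraction iff they are connected by undirected
edges used by the walk `(n, f, s)`. -/
def ContractRel {V : Type*} (n : ℕ) (f : ℕ → V) (s : ℕ → Bool) : V → V → Prop :=
  Relation.EqvGen fun a b => ∃ i < n, s i = false ∧
    ((f i = a ∧ f (i + 1) = b) ∨ (f i = b ∧ f (i + 1) = a))

/-- The edges of the contracted directed multigraph `G'`: the directed edges used by the
walk, between the contraction classes of their endpoints. -/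
def ContractedEdge {V : Type*} (n : ℕ) (f : ℕ → V) (s : ℕ → Bool) (a b : V) : Prop :=
  ∃ i < n, s i = true ∧ ContractRel n f s (f i) a ∧ ContractRel n f s (f (i + 1)) b

section aux
variable {V : Type*} {n : ℕ} {f : ℕ → V} {s : ℕ → Bool}

lemma shift_f (hf : ∀ i, f (i + n) = f i) : ∀ q i, f (i + n * q) = f i := by
  intro q
  induction q with
  | zero => simp
  | succ q ih =>
    intro i
    rw [Nat.mul_succ, ← Nat.add_assoc, hf, ih]

lemma mod_f (hf : ∀ i, f (i + n) = f i) (i : ℕ) : f (i % n) = f i := by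
  conv_rhs => rw [← Nat.mod_add_div i n]
  exact (shift_f hf _ _).symm

lemma modsucc_f (hf : ∀ i, f (i + n) = f i) (i : ℕ) : f (i % n + 1) = f (i + 1) := by
  have h := shift_f hf (i / n) (i % n + 1)
  have h2 : i % n + 1 + n * (i / n) = i + 1 := by
    have := Nat.mod_add_div i n; omega
  rw [h2] at h
  exact h.symm

lemma chain_rel (hn : 0 < n) (hf : ∀ i, f (i + n) = f i) (hs : ∀ i, s (i + n) = s i) :
    ∀ L j, (∀ l < L, s (j + l) = false) → ContractRel n f s (f j) (f (j + L)) := by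
  intro L
  induction L with
  | zero => intro j _; exact Relation.EqvGen.refl _
  | succ L ih =>
    intro j h
    have h1 : ContractRel n f s (f j) (f (j + L)) := ih j (fun l hl => h l (by omega))
    refine Relation.EqvGen.trans _ _ _ h1 (Relation.EqvGen.rel _ _ ?_)
    refine ⟨(j + L) % n, Nat.mod_lt _ hn, ?_, Or.inl ⟨mod_f hf _, ?_⟩⟩
    · rw [mod_f hs]; exact h L (by omega)
    · rw [modsucc_f hf]; rfl

lemma outstep (hn : 0 < n) (hf : ∀ i, f (i + n) = f i) (hs : ∀ i, s (i + n) = s i)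
    {i0 : ℕ} (hi0n : i0 < n) (hi0 : s i0 = true) (j : ℕ) :
    ∃ i, i < n ∧ s i = true ∧ ContractRel n f s (f i) (f j) := by
  classical
  have hex : ∃ k, s (j + k) = true := by
    refine ⟨i0 + n * j - j, ?_⟩
    have hge : j ≤ n * j := Nat.le_mul_of_pos_left j hn
    have : j + (i0 + n * j - j) = i0 + n * j := by omega
    rw [this, shift_f (f := fun i => (s i : Bool)) hs]
    exact hi0
  set k0 := Nat.find hex with hk0def
  have hk0 : s (j + k0) = true := Nat.find_spec hex
  have hmin : ∀ l < k0, s (j + l) = false := by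
    intro l hl
    have := Nat.find_min hex hl
    simpa using this
  have hc := chain_rel hn hf hs k0 j hmin
  refine ⟨(j + k0) % n, Nat.mod_lt _ hn, ?_, ?_⟩
  · rw [mod_f hs]; exact hk0
  · rw [mod_f hf]; exact Relation.EqvGen.symm _ _ hc

lemma instep (hn : 0 < n) (hf : ∀ i, f (i + n) = f i) (hs : ∀ i, s (i + n) = s i)
    {i0 : ℕ} (hi0n : i0 < n) (hi0 : s i0 = true) (j : ℕ) :
    ∃ i, i < n ∧ s i = true ∧ ContractRel n f s (f (i + 1)) (f j) := by
  classical
  have hex : ∃ m, s (j + n - 1 - m) = true := by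
    refine ⟨j + n - 1 - i0, ?_⟩
    have : j + n - 1 - (j + n - 1 - i0) = i0 := by omega
    rw [this]; exact hi0
  set m1 := Nat.find hex with hm1def
  have hm1 : s (j + n - 1 - m1) = true := Nat.find_spec hex
  have hm1le : m1 ≤ j + n - 1 := le_trans (Nat.find_le (by
    have : j + n - 1 - (j + n - 1 - i0) = i0 := by omega
    rw [this]; exact hi0)) (by omega)
  set k := j + n - 1 - m1 with hkdef
  have hund : ∀ l < m1, s (k + 1 + l) = false := by
    intro l hl
    have h1 := Nat.find_min hex (show m1 - 1 - l < m1 by omega)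
    have h2 : j + n - 1 - (m1 - 1 - l) = k + 1 + l := by omega
    rw [h2] at h1
    simpa using h1
  have hc := chain_rel hn hf hs m1 (k + 1) hund
  have hsum : k + 1 + m1 = j + n := by omega
  rw [hsum, hf] at hc
  refine ⟨k % n, Nat.mod_lt _ hn, ?_, ?_⟩
  · rw [mod_f hs]; exact hm1
  · rw [modsucc_f hf]; exact hc

end aux

/-- Let `G` be a mixed graph whose undirected subgraph `Ug` is a forest, carrying a
closed u-turn-free walk `W` using at least one directed edge.  In the directed multigraph
`G'` obtained by deleting unused edges and contracting the undirected edges used by `W`,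
every vertex has in-degree ≥ 1 and out-degree ≥ 1, and hence `G'` contains a directed
cycle. -/
theorem stmt13 {V : Type*} [Fintype V] (D : V → V → Prop) (Ug : SimpleGraph V)
    (hforest : Ug.IsAcyclic)
    (n : ℕ) (f : ℕ → V) (s : ℕ → Bool)
    (hwalk : IsClosedWalk D Ug.Adj n f s) (huturn : UTurnFree f s)
    (hdir : ∃ i < n, s i = true) :
    (∀ j < n, (∃ i < n, s i = true ∧ ContractRel n f s (f (i + 1)) (f j)) ∧
      (∃ i < n, s i = true ∧ ContractRel n f s (f i) (f j))) ∧
    ∃ (m : ℕ) (g : ℕ → V), 0 < m ∧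
      (∀ i < m, ContractedEdge n f s (g i) (g (i + 1))) ∧
      ContractRel n f s (g m) (g 0) ∧
      ∀ i j : ℕ, i < j → j < m → ¬ ContractRel n f s (g i) (g j) := by
  classical
  obtain ⟨hn, hf, hs, _⟩ := hwalk
  obtain ⟨i0, hi0n, hi0⟩ := hdir
  constructor
  · intro j _
    exact ⟨instep hn hf hs hi0n hi0 j, outstep hn hf hs hi0n hi0 j⟩
  · choose nx hnx1 hnx2 hnx3 using outstep hn hf hs hi0n hi0
    set a : ℕ → ℕ := fun t => Nat.rec ((i0 + 1) % n) (fun _ p => (nx p + 1) % n) t with ha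
    have haS : ∀ t, a (t + 1) = (nx (a t) + 1) % n := fun t => rfl
    have haln : ∀ t, a t < n := by
      intro t
      cases t with
      | zero => exact Nat.mod_lt _ hn
      | succ t => exact Nat.mod_lt _ hn
    have hedge : ∀ t, ContractedEdge n f s (f (a t)) (f (a (t + 1))) := by
      intro t
      refine ⟨nx (a t), hnx1 _, hnx2 _, hnx3 _, ?_⟩
      rw [haS, mod_f hf]
      exact Relation.EqvGen.refl _
    -- pigeonhole
    have hmaps : ∀ t ∈ Finset.range (n + 1), a t ∈ Finset.range n :=
      fun t _ => Finset.mem_range.2 (haln t)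
    obtain ⟨t1, ht1, t2, ht2, hne, heq⟩ :=
      Finset.exists_ne_map_eq_of_card_lt_of_maps_to (by simp) hmaps
    have hex2 : ∃ d, 0 < d ∧ ∃ t, ContractRel n f s (f (a t)) (f (a (t + d))) := by
      rcases Nat.lt_or_ge t1 t2 with hlt | hge
      · refine ⟨t2 - t1, by omega, t1, ?_⟩
        rw [show t1 + (t2 - t1) = t2 from by omega, heq]
        exact Relation.EqvGen.refl _
      · have hlt : t2 < t1 := by omega
        refine ⟨t1 - t2, by omega, t2, ?_⟩
        rw [show t2 + (t1 - t2) = t1 from by omega, heq]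
        exact Relation.EqvGen.refl _
    obtain ⟨hd0pos, t, hrel⟩ := Nat.find_spec hex2
    refine ⟨Nat.find hex2, fun i => f (a (t + i)), hd0pos, ?_, ?_, ?_⟩
    · intro i _
      exact hedge (t + i)
    · exact Relation.EqvGen.symm _ _ hrel
    · intro i j hij hjm hcon
      refine Nat.find_min hex2 (show j - i < Nat.find hex2 by omega) ⟨by omega, t + i, ?_⟩
      rw [show t + i + (j - i) = t + j from by omega]
      exact hcon
end

section
/- In the vertex-expansion gadget replacing a mixed-graph vertex v of undirected degree d, connecting each incoming terminal numbered x (a half-integer in (0,d)) forward to vertex ⌈x⌉ of an increasing directed path 0→1→⋯→d and to vertex ⌊x⌋ of a decreasing directed path d-1→d-2→⋯→1, and each outgoing terminal numbered y from vertex ⌊y⌋ of the increasing path and vertex ⌈y⌉ of the decreasing path, yields: there is a directed path from the incoming terminal numbered x to the outgoing terminal numbered y inside the gadget if and only if x ≠ y; moreover the gadget is acyclic. -/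
/-- Vertices of the u-turn-preventing gadget replacing a mixed-graph vertex of
undirected degree `d`: the increasing path `inc 0, …, inc d`, the decreasing path
`dec 1, …, dec (d-1)`, and an incoming terminal `inT k` and outgoing terminal `outT k`
for every half-integer `k + 1/2` with `0 ≤ k < d`. -/
inductive GadgetV : Type
  | inc (i : ℕ)
  | dec (i : ℕ)
  | inT (k : ℕ)
  | outT (k : ℕ)

open GadgetV in
/-- The edges of the gadget: increasing-path edges `i → i+1`, decreasing-path edges
`j+1 → j`, each incoming terminal numbered `k + 1/2` goes to vertex `⌈k+1/2⌉ = k+1` of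
the increasing path and vertex `⌊k+1/2⌋ = k` of the decreasing path, and each outgoing
terminal numbered `k + 1/2` is entered from vertex `⌊k+1/2⌋ = k` of the increasing path
and vertex `⌈k+1/2⌉ = k+1` of the decreasing path. -/
def GadgetE (d : ℕ) : GadgetV → GadgetV → Prop
  | inc i, inc j => j = i + 1 ∧ j ≤ d
  | dec i, dec j => i = j + 1 ∧ 1 ≤ j ∧ i ≤ d - 1
  | inT k, inc j => j = k + 1 ∧ k < d
  | inT k, dec j => j = k ∧ 1 ≤ k ∧ k ≤ d - 1 ∧ k < d
  | inc i, outT k => i = k ∧ k < d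
  | dec i, outT k => i = k + 1 ∧ k + 1 ≤ d - 1 ∧ k < d
  | _, _ => False

open GadgetV

/-- A rank function strictly increasing along edges. -/
private def grank (d : ℕ) : GadgetV → ℕ
  | inc i => 2 * i
  | dec i => 4 * d - 2 * i
  | inT k => 2 * k + 1
  | outT _ => 4 * d

private lemma grank_lt {d : ℕ} {a b : GadgetV} (h : GadgetE d a b) :
    grank d a < grank d b := by
  cases a <;> cases b <;> simp only [GadgetE, grank] at h ⊢ <;> omega

private lemma grank_lt_trans {d : ℕ} {a b : GadgetV}
    (h : Relation.TransGen (GadgetE d) a b) : grank d a < grank d b := by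
  induction h with
  | single h => exact grank_lt h
  | tail _ h ih => exact ih.trans (grank_lt h)

private lemma reach_inc {d x : ℕ} (hx : x < d) :
    ∀ j, x < j → j ≤ d → Relation.TransGen (GadgetE d) (inT x) (inc j) := by
  intro j
  induction j with
  | zero => omega
  | succ j ih =>
    intro h1 h2
    rcases Nat.lt_or_ge x j with hj | hj
    · exact (ih hj (by omega)).tail (show j + 1 = j + 1 ∧ j + 1 ≤ d from ⟨rfl, h2⟩)
    · have : j = x := by omega
      subst this
      exact Relation.TransGen.single (show j + 1 = j + 1 ∧ j < d from ⟨rfl, hx⟩)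

private lemma reach_dec {d x : ℕ} (hx : x < d) (hx1 : 1 ≤ x) :
    ∀ m j, j + m = x → 1 ≤ j → Relation.TransGen (GadgetE d) (inT x) (dec j) := by
  intro m
  induction m with
  | zero =>
    intro j hj _
    have : j = x := by omega
    subst this
    exact Relation.TransGen.single
      (show j = j ∧ 1 ≤ j ∧ j ≤ d - 1 ∧ j < d from ⟨rfl, by omega, by omega, hx⟩)
  | succ m ih =>
    intro j hj hj1
    exact (ih (j + 1) (by omega) (by omega)).tail
      (show j + 1 = j + 1 ∧ 1 ≤ j ∧ j + 1 ≤ d - 1 from ⟨rfl, hj1, by omega⟩)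

/-- Invariant describing everything reachable from `inT x`. -/
private lemma reach_invariant {d x : ℕ} {b : GadgetV}
    (h : Relation.TransGen (GadgetE d) (inT x) b) :
    (∃ j, b = inc j ∧ x < j) ∨ (∃ j, b = dec j ∧ j ≤ x) ∨ (∃ y, b = outT y ∧ y ≠ x) := by
  induction h with
  | single h =>
    rename_i b
    cases b <;> simp only [GadgetE] at h
    · exact Or.inl ⟨_, rfl, by omega⟩
    · exact Or.inr (Or.inl ⟨_, rfl, by omega⟩)
  | tail _ h ih =>
    rename_i b c _
    rcases ih with ⟨j, rfl, hj⟩ | ⟨j, rfl, hj⟩ | ⟨y, rfl, hy⟩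
    · cases c <;> simp only [GadgetE] at h
      · exact Or.inl ⟨_, rfl, by omega⟩
      · exact Or.inr (Or.inr ⟨_, rfl, by omega⟩)
    · cases c <;> simp only [GadgetE] at h
      · exact Or.inr (Or.inl ⟨_, rfl, by omega⟩)
      · exact Or.inr (Or.inr ⟨_, rfl, by omega⟩)
    · cases c <;> simp only [GadgetE] at h

/-- In the gadget there is a directed path from the incoming terminal numbered `x + 1/2`
to the outgoing terminal numbered `y + 1/2` (for `x, y < d`) if and only if `x ≠ y`;
moreover the gadget is acyclic. -/
theorem stmt14 (d : ℕ) :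
    (∀ x y : ℕ, x < d → y < d →
      (Relation.TransGen (GadgetE d) (GadgetV.inT x) (GadgetV.outT y) ↔ x ≠ y)) ∧
    ∀ v : GadgetV, ¬ Relation.TransGen (GadgetE d) v v := by
  constructor
  · intro x y hx hy
    constructor
    · intro h hxy
      subst hxy
      rcases reach_invariant h with ⟨j, hj, _⟩ | ⟨j, hj, _⟩ | ⟨z, hz, hne⟩
      · exact GadgetV.noConfusion hj
      · exact GadgetV.noConfusion hj
      · exact hne (by injection hz.symm)
    · intro hxy
      rcases Nat.lt_or_ge x y with hlt | hge
      · exact (reach_inc hx y hlt (by omega)).tail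
          (show y = y ∧ y < d from ⟨rfl, hy⟩)
      · have hlt : y < x := by omega
        exact (reach_dec hx (by omega) (x - (y + 1)) (y + 1) (by omega) (by omega)).tail
          (show y + 1 = y + 1 ∧ y + 1 ≤ d - 1 ∧ y < d from ⟨rfl, by omega, hy⟩)
  · intro v h
    exact absurd (grank_lt_trans h) (lt_irrefl _)
end

section
/- In a polar graph of maximum total degree 3, a vertex v with several edges can be split: if v has at least two edges at each pole, replacing v by two vertices v1, v2 (each inheriting one pole's edges at one of its poles) joined by a new edge attached to the other poles yields a graph whose regular cycles correspond bijectively to regular cycles of the original graph, with the cycles through v gaining exactly the new edge. -/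
/-!
A regular cycle that avoids `v` is literally a regular cycle of the split graph, and it meets no
edge at `v`. A regular cycle through `v`, rotated to start there, leaves `v` at some pole `b` and
comes back at the pole `!b`. In the split graph the same edges run from the half `Sum.inr b` to
the half `Sum.inr !b`, both at their old (`true`) poles, and the new edge, joining the two free
(`false`) poles, closes the cycle. Conversely, a regular cycle of the split graph through the new
edge, rotated so that this edge comes last, contracts to a regular cycle through `v`; one avoiding
it contains no edge at `v`, so it lives in the original graph.
-/

/-- A regular cycle in a polar graph (vertices `V`, each with two poles indexed by
`Bool`; edges `E` with endpoint poles given by `ends`) with edge set `C`: a cyclic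
sequence of distinct vertices `vs` and distinct edges `es`, where edge `i` joins the
exit pole `(vs i, ps i)` to the entry pole `(vs (i+1), !(ps (i+1)))`, so the cycle
enters and exits each of its vertices via opposite poles. -/
def IsRegCycle {V E : Type*} (ends : E → Sym2 (V × Bool)) (C : Set E) : Prop :=
  ∃ (m : ℕ) (vs : ℕ → V) (es : ℕ → E) (ps : ℕ → Bool),
    0 < m ∧
    (∀ i, vs (i + m) = vs i) ∧ (∀ i, es (i + m) = es i) ∧ (∀ i, ps (i + m) = ps i) ∧
    (∀ i, ends (es i) = s((vs i, ps i), (vs (i + 1), !(ps (i + 1))))) ∧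
    (∀ i j : ℕ, i < j → j < m → vs i ≠ vs j) ∧
    (∀ i j : ℕ, i < j → j < m → es i ≠ es j) ∧
    C = {e | ∃ i < m, es i = e}

/-- Splitting the vertex `v` into two vertices `Sum.inr true` and `Sum.inr false`:
edges formerly at pole `(v, b)` attach to the `true` pole of the new vertex `Sum.inr b`. -/
def splitPole {V : Type*} [DecidableEq V] (v : V) (p : V × Bool) : (V ⊕ Bool) × Bool :=
  if p.1 = v then (Sum.inr p.2, true) else (Sum.inl p.1, p.2)

/-- The endpoint map of the split graph: old edges are reattached via `splitPole`, and
the single new edge joins the free (`false`) poles of the two new vertices. -/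
def splitEnds {V E : Type*} [DecidableEq V] (ends : E → Sym2 (V × Bool)) (v : V) :
    E ⊕ Unit → Sym2 ((V ⊕ Bool) × Bool)
  | Sum.inl e => Sym2.map (splitPole v) (ends e)
  | Sum.inr _ => s(((Sum.inr true : V ⊕ Bool), false), ((Sum.inr false : V ⊕ Bool), false))

open Set Function

theorem injOn_Iio_of_ne {α : Type*} {f : ℕ → α} {m : ℕ}
    (h : ∀ i j, i < j → j < m → f i ≠ f j) : InjOn f (Iio m) := by
  intro i hi j hj hij
  by_contra hne
  rcases lt_or_gt_of_ne hne with hlt | hlt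
  · exact h i j hlt hj hij
  · exact h j i hlt hi hij.symm

theorem bijOn_add_mod {m : ℕ} (hm : 0 < m) (k : ℕ) :
    BijOn (fun i => (i + k) % m) (Iio m) (Iio m) := by
  have hmaps : MapsTo (fun i => (i + k) % m) (Iio m) (Iio m) := fun i _ => Nat.mod_lt _ hm
  refine ((finite_Iio m).injOn_iff_bijOn_of_mapsTo hmaps).mp fun i hi j hj hij => ?_
  have := Nat.ModEq.add_right_cancel' k hij
  rwa [Nat.ModEq, Nat.mod_eq_of_lt hi, Nat.mod_eq_of_lt hj] at this

theorem exists_eqOn_inl {α β : Type*} {f : ℕ → α ⊕ β} {s : Set ℕ} (hs : s.Nonempty)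
    (h : ∀ i ∈ s, ∃ a, f i = Sum.inl a) :
    ∃ g : ℕ → α, EqOn f (fun i => Sum.inl (g i)) s := by
  obtain ⟨a, -⟩ := h _ hs.some_mem
  have : Nonempty α := ⟨a⟩
  choose! g hg using h
  exact ⟨g, hg⟩

theorem Iio_add_one_eq_insert (m : ℕ) : Iio (m + 1) = insert m (Iio m) :=
  Order.Iio_succ_eq_insert m

theorem insert_inr_image_inl_inj {α β : Type*} {b : β} {s t : Set α} :
    insert (Sum.inr b : α ⊕ β) (Sum.inl '' s) = insert (Sum.inr b) (Sum.inl '' t) ↔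
      s = t := by
  refine ⟨fun h => ?_, fun h => h ▸ rfl⟩
  have := congrArg (· \ {(Sum.inr b : α ⊕ β)}) h
  simp only [insert_sdiff_self_of_notMem (by simp : Sum.inr b ∉ Sum.inl '' _)] at this
  exact image_injective.mpr Sum.inl_injective this

section RegCycle

variable {V E : Type*} {ends : E → Sym2 (V × Bool)} {C : Set E} {m : ℕ}
  {x : ℕ → V × Bool} {es : ℕ → E}

def oppPole (p : V × Bool) : V × Bool := (p.1, !p.2)

theorem oppPole_oppPole (p : V × Bool) : oppPole (oppPole p) = p := by
  simp [oppPole]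

/-- A regular cycle leaving its `i`-th vertex at the pole `x i` along the edge `es i`, which
enters the next vertex at the opposite pole of `x ((i + 1) % m)`; only indices below `m` matter. -/
structure IsRegCycleOn (ends : E → Sym2 (V × Bool)) (C : Set E) (m : ℕ)
    (x : ℕ → V × Bool) (es : ℕ → E) : Prop where
  pos : 0 < m
  ends_eq : ∀ i < m, ends (es i) = s(x i, oppPole (x ((i + 1) % m)))
  injOn_fst : InjOn (fun i => (x i).1) (Iio m)
  injOn_edge : InjOn es (Iio m)
  image_edge : es '' Iio m = C

theorem isRegCycle_iff_exists_isRegCycleOn :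
    IsRegCycle ends C ↔ ∃ m x es, IsRegCycleOn ends C m x es := by
  constructor
  · rintro ⟨m, vs, es, ps, hm, hvs, -, hps, hends, hdv, hde, rfl⟩
    refine ⟨m, fun i => (vs i, ps i), es, hm, fun i _ => ?_, injOn_Iio_of_ne hdv,
      injOn_Iio_of_ne hde, ?_⟩
    · rw [hends, oppPole, Periodic.map_mod_nat hvs, Periodic.map_mod_nat hps]
    · ext e
      simp
  · rintro ⟨m, x, es, h⟩
    refine ⟨m, fun i => (x (i % m)).1, fun i => es (i % m), fun i => (x (i % m)).2, h.pos,
      fun i => by simp, fun i => by simp, fun i => by simp, fun i => ?_, fun i j hij hj => ?_,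
      fun i j hij hj => ?_, ?_⟩
    · rw [h.ends_eq _ (Nat.mod_lt _ h.pos), Nat.mod_add_mod]
      rfl
    · dsimp only
      rw [Nat.mod_eq_of_lt (hij.trans hj), Nat.mod_eq_of_lt hj]
      exact h.injOn_fst.ne (hij.trans hj) hj hij.ne
    · dsimp only
      rw [Nat.mod_eq_of_lt (hij.trans hj), Nat.mod_eq_of_lt hj]
      exact h.injOn_edge.ne (hij.trans hj) hj hij.ne
    · rw [← h.image_edge]
      ext e
      constructor
      · rintro ⟨i, hi, rfl⟩
        exact ⟨i, hi, congrArg es (Nat.mod_eq_of_lt hi)⟩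
      · rintro ⟨i, hi, rfl⟩
        exact ⟨i % m, Nat.mod_lt _ h.pos, rfl⟩

namespace IsRegCycleOn

theorem rotate (h : IsRegCycleOn ends C m x es) (k : ℕ) :
    IsRegCycleOn ends C m (fun i => x ((i + k) % m)) (fun i => es ((i + k) % m)) := by
  have hbij := bijOn_add_mod h.pos k
  refine ⟨h.pos, fun i _ => ?_, h.injOn_fst.comp hbij.injOn hbij.mapsTo,
    h.injOn_edge.comp hbij.injOn hbij.mapsTo, ?_⟩
  · rw [h.ends_eq _ (Nat.mod_lt _ h.pos), Nat.mod_add_mod, Nat.mod_add_mod, Nat.add_right_comm]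
  · change (es ∘ fun i => (i + k) % m) '' Iio m = C
    rw [image_comp, hbij.image_eq, h.image_edge]

theorem congr {x' : ℕ → V × Bool} {es' : ℕ → E} (h : IsRegCycleOn ends C m x es)
    (hx : EqOn x x' (Iio m)) (he : EqOn es es' (Iio m)) : IsRegCycleOn ends C m x' es' := by
  have hmod : ∀ i, (i + 1) % m ∈ Iio m := fun i => Nat.mod_lt _ h.pos
  refine ⟨h.pos, fun i hi => ?_, ?_, h.injOn_edge.congr he, he.image_eq ▸ h.image_edge⟩
  · rw [← he hi, ← hx hi, ← hx (hmod i), h.ends_eq i hi]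
  · exact h.injOn_fst.congr fun i hi => by simp only [hx hi]

theorem mem_ends (h : IsRegCycleOn ends C m x es) {i : ℕ} (hi : i < m) : x i ∈ ends (es i) := by
  rw [h.ends_eq i hi]
  exact Sym2.mem_mk_left _ _

theorem exists_fst_eq_of_mem_ends (h : IsRegCycleOn ends C m x es) {e : E} (he : e ∈ C)
    {p : V × Bool} (hp : p ∈ ends e) : ∃ i < m, (x i).1 = p.1 := by
  rw [← h.image_edge] at he
  obtain ⟨i, hi, rfl⟩ := he
  rw [h.ends_eq i hi, Sym2.mem_iff] at hp
  rcases hp with rfl | rfl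
  · exact ⟨i, hi, rfl⟩
  · exact ⟨_, Nat.mod_lt _ h.pos, rfl⟩

end IsRegCycleOn

end RegCycle

section Split

variable {V E : Type*} [DecidableEq V] {ends : E → Sym2 (V × Bool)} {v : V} {C : Set E}
  {m : ℕ} {x : ℕ → V × Bool} {es : ℕ → E}

theorem splitPole_self (v : V) (b : Bool) : splitPole v (v, b) = (Sum.inr b, true) := by
  simp [splitPole]

theorem splitPole_of_ne {w : V} (h : w ≠ v) (b : Bool) : splitPole v (w, b) = (Sum.inl w, b) := by
  simp [splitPole, h]

def unsplitPole (v : V) : (V ⊕ Bool) × Bool → V × Bool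
  | (Sum.inl w, b) => (w, b)
  | (Sum.inr b, _) => (v, b)

theorem unsplitPole_splitPole (p : V × Bool) : unsplitPole v (splitPole v p) = p := by
  obtain ⟨w, b⟩ := p
  by_cases h : w = v
  · subst h; rw [splitPole_self]; rfl
  · rw [splitPole_of_ne h]; rfl

theorem splitPole_injective : Injective (splitPole v) :=
  LeftInverse.injective unsplitPole_splitPole

theorem splitPole_oppPole {p : V × Bool} (h : p.1 ≠ v) :
    splitPole v (oppPole p) = oppPole (splitPole v p) := by
  simp [splitPole, oppPole, h]

theorem fst_eq_of_splitPole_fst_eq {p q : V × Bool}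
    (h : (splitPole v p).1 = (splitPole v q).1) : p.1 = q.1 := by
  obtain ⟨a, b⟩ := p
  obtain ⟨c, d⟩ := q
  by_cases ha : a = v <;> by_cases hc : c = v <;> simp_all [splitPole]

theorem splitPole_fst_eq_inr {p : V × Bool} {c : Bool} (h : (splitPole v p).1 = Sum.inr c) :
    p = (v, c) := by
  obtain ⟨a, b⟩ := p
  by_cases ha : a = v <;> simp_all [splitPole]

theorem injOn_fst_splitPole_iff {s : Set ℕ} (hs : (s ∩ {i | (x i).1 = v}).Subsingleton) :
    InjOn (fun i => (splitPole v (x i)).1) s ↔ InjOn (fun i => (x i).1) s := by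
  refine ⟨fun h i hi j hj hij => ?_,
    fun h i hi j hj hij => h hi hj (fst_eq_of_splitPole_fst_eq hij)⟩
  by_cases hv : (x i).1 = v
  · exact hs ⟨hi, hv⟩ ⟨hj, hij.symm.trans hv⟩
  · refine h hi hj ?_
    simp only [splitPole, hv, ← hij, if_false]

def splitEdgeSet (ends : E → Sym2 (V × Bool)) (v : V) (C : Set E) : Set (E ⊕ Unit) :=
  Sum.inl '' C ∪ {x | x = Sum.inr () ∧ ∃ e ∈ C, ∃ b : Bool, (v, b) ∈ ends e}

omit [DecidableEq V] in
theorem inr_mem_splitEdgeSet :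
    Sum.inr () ∈ splitEdgeSet ends v C ↔ ∃ e ∈ C, ∃ b : Bool, (v, b) ∈ ends e := by
  simp [splitEdgeSet]

omit [DecidableEq V] in
theorem splitEdgeSet_of_inr_notMem (h : Sum.inr () ∉ splitEdgeSet ends v C) :
    splitEdgeSet ends v C = Sum.inl '' C :=
  union_eq_left.mpr fun _ hy => absurd (hy.1 ▸ Or.inr hy) h

omit [DecidableEq V] in
theorem splitEdgeSet_of_inr_mem (h : Sum.inr () ∈ splitEdgeSet ends v C) :
    splitEdgeSet ends v C = insert (Sum.inr ()) (Sum.inl '' C) := by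
  ext y
  rcases y with e | ⟨⟩
  · simp [splitEdgeSet]
  · simpa using h

theorem isRegCycleOn_splitEnds_iff_of_avoid (hx : ∀ i < m, (x i).1 ≠ v) :
    IsRegCycleOn ends C m x es ↔
      IsRegCycleOn (splitEnds ends v) (Sum.inl '' C) m (fun i => splitPole v (x i))
        (fun i => Sum.inl (es i)) := by
  have hends : ∀ i < m, splitEnds ends v (Sum.inl (es i)) =
        s(splitPole v (x i), oppPole (splitPole v (x ((i + 1) % m)))) ↔
      ends (es i) = s(x i, oppPole (x ((i + 1) % m))) := fun i hi => by
    rw [← splitPole_oppPole (hx _ (Nat.mod_lt _ (i.zero_le.trans_lt hi))), ← Sym2.map_mk]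
    exact (Sym2.map.injective splitPole_injective).eq_iff
  have hfst := injOn_fst_splitPole_iff (x := x) (s := Iio m) fun i hi _ _ => absurd hi.2 (hx i hi.1)
  have hedge : InjOn (fun i => (Sum.inl (es i) : E ⊕ Unit)) (Iio m) ↔ InjOn es (Iio m) := by
    simp only [InjOn, Sum.inl.injEq]
  have himage : (fun i => (Sum.inl (es i) : E ⊕ Unit)) '' Iio m = Sum.inl '' C ↔
      es '' Iio m = C := by
    rw [← image_image, (image_injective.mpr Sum.inl_injective).eq_iff]
  exact ⟨fun h => ⟨h.pos, fun i hi => (hends i hi).2 (h.ends_eq i hi), hfst.2 h.injOn_fst,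
      hedge.2 h.injOn_edge, himage.2 h.image_edge⟩,
    fun h => ⟨h.pos, fun i hi => (hends i hi).1 (h.ends_eq i hi), hfst.1 h.injOn_fst,
      hedge.1 h.injOn_edge, himage.1 h.image_edge⟩⟩

def splitCyclePoles (v : V) (b : Bool) (m : ℕ) (x : ℕ → V × Bool) (i : ℕ) :
    (V ⊕ Bool) × Bool :=
  if i = m then (Sum.inr !b, false) else splitPole v (x i)

def splitCycleEdges (m : ℕ) (es : ℕ → E) (i : ℕ) : E ⊕ Unit :=
  if i = m then Sum.inr () else Sum.inl (es i)

theorem eqOn_splitCyclePoles {b : Bool} :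
    EqOn (splitCyclePoles v b m x) (fun i => splitPole v (x i)) (Iio m) :=
  fun _ hi => if_neg (ne_of_lt hi)

theorem eqOn_splitCycleEdges : EqOn (splitCycleEdges m es) (fun i => Sum.inl (es i)) (Iio m) :=
  fun _ hi => if_neg (ne_of_lt hi)

theorem injOn_splitCycleEdges_iff :
    InjOn (splitCycleEdges m es) (Iio (m + 1)) ↔ InjOn es (Iio m) := by
  rw [Iio_add_one_eq_insert, injOn_insert self_notMem_Iio,
    eqOn_splitCycleEdges.injOn_iff]
  simp [InjOn, splitCycleEdges]

theorem image_splitCycleEdges_eq_iff :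
    splitCycleEdges m es '' Iio (m + 1) = insert (Sum.inr ()) (Sum.inl '' C) ↔
      es '' Iio m = C := by
  rw [Iio_add_one_eq_insert, image_insert_eq, eqOn_splitCycleEdges.image_eq,
    ← image_image, show splitCycleEdges m es m = Sum.inr () from if_pos rfl]
  exact insert_inr_image_inl_inj

theorem injOn_fst_splitCyclePoles_iff {b : Bool} (hx0 : x 0 = (v, b))
    (hx : ∀ i, 0 < i → i < m → (x i).1 ≠ v) :
    InjOn (fun i => (splitCyclePoles v b m x i).1) (Iio (m + 1)) ↔
      InjOn (fun i => (x i).1) (Iio m) := by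
  have hx_eq_v : ∀ i < m, (x i).1 = v → i = 0 := fun i hi hv =>
    Nat.eq_zero_of_not_pos fun hi0 => hx i hi0 hi hv
  have hnew :
      (splitCyclePoles v b m x m).1 ∉ (fun i => (splitCyclePoles v b m x i).1) '' Iio m := by
    rintro ⟨i, hi, h⟩
    dsimp only at h
    rw [eqOn_splitCyclePoles hi, splitCyclePoles, if_pos rfl] at h
    obtain rfl : i = 0 := hx_eq_v i hi (congrArg Prod.fst (splitPole_fst_eq_inr h))
    simpa [hx0] using splitPole_fst_eq_inr h
  rw [Iio_add_one_eq_insert, injOn_insert self_notMem_Iio, and_iff_left hnew,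
    EqOn.injOn_iff fun i hi => congrArg Prod.fst (eqOn_splitCyclePoles hi)]
  exact injOn_fst_splitPole_iff fun i hi j hj =>
    (hx_eq_v i hi.1 hi.2).trans (hx_eq_v j hj.1 hj.2).symm

theorem isRegCycleOn_splitEnds_iff_of_start {b : Bool} (hm : 0 < m) (hx0 : x 0 = (v, b))
    (hx : ∀ i, 0 < i → i < m → (x i).1 ≠ v) :
    IsRegCycleOn ends C m x es ↔
      IsRegCycleOn (splitEnds ends v) (insert (Sum.inr ()) (Sum.inl '' C)) (m + 1)
        (splitCyclePoles v b m x) (splitCycleEdges m es) := by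
  set x' := splitCyclePoles v b m x
  have hx'_lt : EqOn x' (fun i => splitPole v (x i)) (Iio m) := eqOn_splitCyclePoles
  have hopp : ∀ i < m, oppPole (x' (i + 1)) = splitPole v (oppPole (x ((i + 1) % m))) := by
    intro i hi
    rcases Nat.lt_or_ge (i + 1) m with h | h
    · rw [Nat.mod_eq_of_lt h, hx'_lt h, splitPole_oppPole (hx _ i.succ_pos h)]
    · rw [show i + 1 = m by omega, Nat.mod_self, hx0]
      simp [x', splitCyclePoles, oppPole, splitPole_self]
  have hends : ∀ i < m, splitEnds ends v (splitCycleEdges m es i) =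
        s(x' i, oppPole (x' ((i + 1) % (m + 1)))) ↔
      ends (es i) = s(x i, oppPole (x ((i + 1) % m))) := fun i hi => by
    rw [eqOn_splitCycleEdges hi, hx'_lt hi,
      Nat.mod_eq_of_lt (Nat.succ_lt_succ hi), hopp i hi, ← Sym2.map_mk]
    exact (Sym2.map.injective splitPole_injective).eq_iff
  have hends_m : splitEnds ends v (splitCycleEdges m es m) =
      s(x' m, oppPole (x' ((m + 1) % (m + 1)))) := by
    cases b <;> simp [x', splitCyclePoles, splitCycleEdges, hm.ne, hx0, splitPole_self,
      splitEnds, oppPole, Sym2.eq_swap]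
  have hfst := injOn_fst_splitCyclePoles_iff hx0 hx
  refine ⟨fun h => ⟨Nat.succ_pos m, fun i hi => ?_, hfst.2 h.injOn_fst,
      injOn_splitCycleEdges_iff.2 h.injOn_edge, image_splitCycleEdges_eq_iff.2 h.image_edge⟩,
    fun h => ⟨hm, fun i hi => (hends i hi).1 (h.ends_eq i (Nat.lt_succ_of_lt hi)),
      hfst.1 h.injOn_fst, injOn_splitCycleEdges_iff.1 h.injOn_edge,
      image_splitCycleEdges_eq_iff.1 h.image_edge⟩⟩
  rcases (Nat.le_of_lt_succ hi).eq_or_lt with rfl | hi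
  · exact hends_m
  · exact (hends i hi).2 (h.ends_eq i hi)

theorem exists_of_splitEnds_inr_eq {p q : (V ⊕ Bool) × Bool}
    (h : splitEnds ends v (Sum.inr ()) = s(p, oppPole q)) :
    ∃ b, p = (Sum.inr !b, false) ∧ q = (Sum.inr b, true) := by
  rcases Sym2.eq_iff.mp h with ⟨h1, h2⟩ | ⟨h1, h2⟩
  · exact ⟨false, h1.symm, by rw [← oppPole_oppPole q, ← h2]; rfl⟩
  · exact ⟨true, h2.symm, by rw [← oppPole_oppPole q, ← h1]; rfl⟩

namespace IsRegCycleOn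

variable {S : Set (E ⊕ Unit)} {x' : ℕ → (V ⊕ Bool) × Bool} {es' : ℕ → E ⊕ Unit}

theorem unsplitPole_mem_ends (h : IsRegCycleOn (splitEnds ends v) S m x' es') {i : ℕ}
    (hi : i < m) {e : E} (he : es' i = Sum.inl e) :
    unsplitPole v (x' i) ∈ ends e ∧ splitPole v (unsplitPole v (x' i)) = x' i := by
  have hmem := h.mem_ends hi
  rw [he] at hmem
  obtain ⟨p, hp, hpx⟩ := Sym2.mem_map.mp hmem
  rw [← hpx, unsplitPole_splitPole]
  exact ⟨hp, rfl⟩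

theorem exists_eq_split_of_avoid (h : IsRegCycleOn (splitEnds ends v) (Sum.inl '' C) m x' es')
    (hC : ∀ e ∈ C, ∀ b, (v, b) ∉ ends e) :
    ∃ (x : ℕ → V × Bool) (es : ℕ → E), (∀ i < m, (x i).1 ≠ v) ∧
      EqOn x' (fun i => splitPole v (x i)) (Iio m) ∧
      EqOn es' (fun i => Sum.inl (es i)) (Iio m) := by
  have hes'C : ∀ i ∈ Iio m, es' i ∈ Sum.inl '' C := fun i hi =>
    h.image_edge ▸ mem_image_of_mem _ hi
  obtain ⟨es, hes⟩ := exists_eqOn_inl ⟨0, h.pos⟩ fun i hi => by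
    obtain ⟨e, -, he⟩ := hes'C i hi
    exact ⟨e, he.symm⟩
  refine ⟨fun i => unsplitPole v (x' i), es, fun i hi hxi => ?_,
    fun i hi => (h.unsplitPole_mem_ends hi (hes hi)).2.symm, hes⟩
  have hesC : es i ∈ C := Sum.inl_injective.mem_set_image.mp (hes hi ▸ hes'C i hi)
  have hp : unsplitPole v (x' i) = (v, (unsplitPole v (x' i)).2) := Prod.ext hxi rfl
  exact hC _ hesC _ (hp ▸ (h.unsplitPole_mem_ends hi (hes hi)).1)

theorem exists_eq_split_of_last_eq_inr (h : IsRegCycleOn (splitEnds ends v) S (m + 1) x' es')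
    (hm : es' m = Sum.inr ()) :
    ∃ (x : ℕ → V × Bool) (es : ℕ → E) (b : Bool), 0 < m ∧ x 0 = (v, b) ∧
      (∀ i, 0 < i → i < m → (x i).1 ≠ v) ∧
      EqOn x' (splitCyclePoles v b m x) (Iio (m + 1)) ∧
      EqOn es' (splitCycleEdges m es) (Iio (m + 1)) := by
  have hnew := h.ends_eq m m.lt_succ_self
  rw [hm, Nat.mod_self] at hnew
  obtain ⟨b, hxm, hx0⟩ := exists_of_splitEnds_inr_eq hnew
  have hm0 : 0 < m := Nat.pos_of_ne_zero fun hm0 => by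
    subst hm0
    simp [hxm] at hx0
  have hinl : ∀ i ∈ Iio m, ∃ e, es' i = Sum.inl e := fun i hi => by
    have hne := h.injOn_edge.ne (Nat.lt_succ_of_lt hi) m.lt_succ_self (ne_of_lt hi)
    rw [hm] at hne
    rcases hei : es' i with e | ⟨⟩
    · exact ⟨e, rfl⟩
    · exact absurd hei hne
  obtain ⟨es, hes⟩ := exists_eqOn_inl ⟨0, hm0⟩ hinl
  have hsplit : ∀ i < m, splitPole v (unsplitPole v (x' i)) = x' i := fun i hi =>
    (h.unsplitPole_mem_ends (Nat.lt_succ_of_lt hi) (hes hi)).2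
  refine ⟨fun i => unsplitPole v (x' i), es, b, hm0,
    show unsplitPole v (x' 0) = _ by rw [hx0]; rfl, fun i hi0 hi hxi => ?_, fun i hi => ?_,
    fun i hi => ?_⟩
  · -- a middle vertex at `v` would be a half of `v`, but both are visited at `0` and `m`
    obtain ⟨c, hc⟩ : ∃ c, unsplitPole v (x' i) = (v, c) := ⟨_, Prod.ext hxi rfl⟩
    have hxi' : (x' i).1 = Sum.inr c := by rw [← hsplit i hi, hc, splitPole_self]
    have hi' : i ∈ Iio (m + 1) := Nat.lt_succ_of_lt hi
    by_cases hcb : c = b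
    · exact hi0.ne' (h.injOn_fst hi' (Nat.succ_pos m) (by simp [hxi', hx0, hcb]))
    · exact (ne_of_lt hi) (h.injOn_fst hi' m.lt_succ_self
        (by simp [hxi', hxm, Bool.eq_not_iff.mpr hcb]))
  · rcases (Nat.le_of_lt_succ hi).eq_or_lt with rfl | hi
    · simp [splitCyclePoles, hxm]
    · rw [eqOn_splitCyclePoles hi]
      exact (hsplit i hi).symm
  · rcases (Nat.le_of_lt_succ hi).eq_or_lt with rfl | hi
    · simp [splitCycleEdges, hm]
    · exact (hes hi).trans (eqOn_splitCycleEdges hi).symm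

end IsRegCycleOn

theorem isRegCycle_splitEnds_of_isRegCycle (h : IsRegCycle ends C) :
    IsRegCycle (splitEnds ends v) (splitEdgeSet ends v C) := by
  obtain ⟨m, x, es, h⟩ := isRegCycle_iff_exists_isRegCycleOn.mp h
  rw [isRegCycle_iff_exists_isRegCycleOn]
  by_cases hv : ∃ i < m, (x i).1 = v
  · obtain ⟨k, hk, hxk⟩ := hv
    have hr := h.rotate k
    have hx0 : x ((0 + k) % m) = (v, (x k).2) := by rw [zero_add, Nat.mod_eq_of_lt hk, ← hxk]
    have hx : ∀ i, 0 < i → i < m → (x ((i + k) % m)).1 ≠ v := fun i hi0 hi hxi =>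
      hi0.ne' (hr.injOn_fst hi h.pos (hxi.trans (congrArg Prod.fst hx0).symm))
    have hS := splitEdgeSet_of_inr_mem (ends := ends) (v := v) (C := C) <|
      inr_mem_splitEdgeSet.mpr ⟨es k, h.image_edge ▸ mem_image_of_mem es hk, (x k).2,
        by rw [← hxk]; exact h.mem_ends hk⟩
    exact ⟨_, _, _, hS ▸ (isRegCycleOn_splitEnds_iff_of_start h.pos hx0 hx).mp hr⟩
  · push Not at hv
    have hS := splitEdgeSet_of_inr_notMem (ends := ends) (v := v) (C := C) <| by
      rw [inr_mem_splitEdgeSet]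
      rintro ⟨e, he, b, hb⟩
      obtain ⟨i, hi, hxi⟩ := h.exists_fst_eq_of_mem_ends he hb
      exact hv i hi hxi
    exact ⟨_, _, _, hS ▸ (isRegCycleOn_splitEnds_iff_of_avoid hv).mp h⟩

theorem isRegCycle_of_isRegCycle_splitEnds
    (h : IsRegCycle (splitEnds ends v) (splitEdgeSet ends v C)) : IsRegCycle ends C := by
  obtain ⟨m', x', es', h⟩ := isRegCycle_iff_exists_isRegCycleOn.mp h
  rw [isRegCycle_iff_exists_isRegCycleOn]
  by_cases hnew : Sum.inr () ∈ splitEdgeSet ends v C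
  · rw [splitEdgeSet_of_inr_mem hnew] at h
    have hnew' : Sum.inr () ∈ es' '' Iio m' := h.image_edge ▸ mem_insert _ _
    obtain ⟨k, hk, hek⟩ := hnew'
    obtain ⟨m, rfl⟩ := Nat.exists_eq_add_one.mpr h.pos
    have hr := h.rotate (k + 1)
    have hlast : es' ((m + (k + 1)) % (m + 1)) = Sum.inr () := by
      rw [show m + (k + 1) = k + (m + 1) by ring, Nat.add_mod_right, Nat.mod_eq_of_lt hk, hek]
    obtain ⟨x, es, b, hm, hx0, hx, hxe, hee⟩ := hr.exists_eq_split_of_last_eq_inr hlast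
    exact ⟨m, x, es, (isRegCycleOn_splitEnds_iff_of_start hm hx0 hx).mpr (hr.congr hxe hee)⟩
  · rw [splitEdgeSet_of_inr_notMem hnew] at h
    obtain ⟨x, es, hx, hxe, hee⟩ := h.exists_eq_split_of_avoid fun e he b hb =>
      hnew (inr_mem_splitEdgeSet.mpr ⟨e, he, b, hb⟩)
    exact ⟨m', x, es, (isRegCycleOn_splitEnds_iff_of_avoid hx).mpr (h.congr hxe hee)⟩

end Split

theorem stmt15_general {V E : Type*} [DecidableEq V] (ends : E → Sym2 (V × Bool)) (v : V) :
    ∀ C : Set E,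
      IsRegCycle ends C ↔
      IsRegCycle (splitEnds ends v)
        (Sum.inl '' C ∪
          {x : E ⊕ Unit | x = Sum.inr () ∧ ∃ e ∈ C, ∃ b : Bool, (v, b) ∈ ends e}) :=
  fun _ => ⟨isRegCycle_splitEnds_of_isRegCycle, isRegCycle_of_isRegCycle_splitEnds⟩

/-- Splitting a vertex `v` that has at least two edges at each pole: a set `C` of edges
forms a regular cycle in the original polar graph if and only if the corresponding set in
the split graph—together with the new edge exactly when the cycle passes through `v`—
forms a regular cycle there. -/
theorem stmt15 {V E : Type*} [DecidableEq V] (ends : E → Sym2 (V × Bool)) (v : V)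
    (h2t : ∃ e f : E, e ≠ f ∧ (v, true) ∈ ends e ∧ (v, true) ∈ ends f)
    (h2f : ∃ e f : E, e ≠ f ∧ (v, false) ∈ ends e ∧ (v, false) ∈ ends f) :
    ∀ C : Set E,
      IsRegCycle ends C ↔
      IsRegCycle (splitEnds ends v)
        (Sum.inl '' C ∪
          {x : E ⊕ Unit | x = Sum.inr () ∧ ∃ e ∈ C, ∃ b : Bool, (v, b) ∈ ends e}) :=
  stmt15_general ends v
end
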